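/- arXiv:1311.2032 — 5 statements merged into one kernel-verified Lean document; each statement's English description precedes it below -/
import Mathlib

section
/- Let P be a finite set of points in ℝ², let p_j ∈ P, and let p_i ∈ P∖{p_j} be a nearest neighbor of p_j, i.e., ‖p_j − p_i‖ = min_{r ∈ P∖{p_j}} ‖p_j − r‖. Let l ∈ {0,…,5} be such that p_j ∈ W_l(p_i). Then p_j has the minimum b_l-coordinate among the points of P in W_l(p_i): ⟨p_j − p_i, b_l⟩ = min_{p_k ∈ V_l(p_i)} ⟨p_k − p_i, b_l⟩. -/
/- Common geometric setup: the Euclidean plane, wedges `W_l`, bisectors `b_l`,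
equilateral triangles `∆_l` and `l`-tri's, circular sectors `σ_l` and `l`-pies,
and the proximity graphs (Semi-Yao, nearest-neighbor, Equilateral/Pie Delaunay,
Yao) together with Euclidean minimum spanning trees. -/

open Real EuclideanGeometry
open scoped RealInnerProductSpace

noncomputable section

abbrev E : Type := EuclideanSpace ℝ (Fin 2)

/-- The point `(a, b)` in the Euclidean plane. -/
def pt (a b : ℝ) : E := (WithLp.equiv 2 (Fin 2 → ℝ)).symm ![a, b]

/-- The unit vector at polar angle `θ`. -/
def dir (θ : ℝ) : E := pt (Real.cos θ) (Real.sin θ)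

/-- The lower boundary angle `(2l-1)π/6` of the `l`-th wedge. -/
def lo (l : Fin 6) : ℝ := (2 * ((l : ℕ) : ℝ) - 1) * π / 6

/-- The upper boundary angle `(2l+1)π/6` of the `l`-th wedge. -/
def hi (l : Fin 6) : ℝ := (2 * ((l : ℕ) : ℝ) + 1) * π / 6

/-- The half-open wedge `W_l`: all nonzero points whose polar angle (mod `2π`)
lies in `[(2l-1)π/6, (2l+1)π/6)`. -/
def wedge (l : Fin 6) : Set E :=
  {x | x ≠ 0 ∧ ∃ θ : ℝ, lo l ≤ θ ∧ θ < hi l ∧ x = ‖x‖ • dir θ}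

/-- `W_l(p)`, the translate of `W_l` with apex `p`. -/
def wedgeAt (l : Fin 6) (p : E) : Set E := {x | x - p ∈ wedge l}

/-- The unit bisector vector `b_l = (cos(lπ/3), sin(lπ/3))` of `W_l`. -/
def bvec (l : Fin 6) : E := dir (((l : ℕ) : ℝ) * π / 3)

/-- `V_l(p) = P ∩ W_l(p)`. -/
def Vl (P : Finset E) (l : Fin 6) (p : E) : Set E := {x | x ∈ P ∧ x ∈ wedgeAt l p}

/-- The closed equilateral triangle `∆_l` with vertices `0`, `dir ((2l-1)π/6)`,
`dir ((2l+1)π/6)`. -/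
def tri (l : Fin 6) : Set E := convexHull ℝ {0, dir (lo l), dir (hi l)}

/-- The vertex set of `∆_l`. -/
def triVerts (l : Fin 6) : Set E := {0, dir (lo l), dir (hi l)}

/-- The `l`-tri `c + lam • ∆_l`. -/
def lTri (l : Fin 6) (c : E) (lam : ℝ) : Set E := (fun x => c + lam • x) '' tri l

/-- The closed circular sector (piece of pie) `σ_l` of the unit disk. -/
def sector (l : Fin 6) : Set E :=
  {x | ‖x‖ ≤ 1 ∧ (x = 0 ∨ ∃ θ : ℝ, lo l ≤ θ ∧ θ ≤ hi l ∧ x = ‖x‖ • dir θ)}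

/-- The `l`-pie `c + lam • σ_l`. -/
def lPie (l : Fin 6) (c : E) (lam : ℝ) : Set E := (fun x => c + lam • x) '' sector l

/-- Directed Semi-Yao graph edge from `a` to `b`: `a ∈ V_l(b)` for some `l` and `a`
has the minimum `b_l`-coordinate among the points of `V_l(b)`. -/
def SYG (P : Finset E) (a b : E) : Prop :=
  b ∈ P ∧ ∃ l : Fin 6, a ∈ Vl P l b ∧
    ∀ r ∈ Vl P l b, ⟪a - b, bvec l⟫ ≤ ⟪r - b, bvec l⟫

/-- Undirected Semi-Yao graph edge. -/
def SYGu (P : Finset E) (p q : E) : Prop := SYG P p q ∨ SYG P q p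

/-- Directed nearest-neighbor graph edge from `a` to `b`: `b ∈ P \ {a}` and
`‖a - b‖ = min_{r ∈ P \ {a}} ‖a - r‖`. -/
def NNG (P : Finset E) (a b : E) : Prop :=
  a ∈ P ∧ b ∈ P ∧ b ≠ a ∧ ∀ r ∈ P, r ≠ a → ‖a - b‖ ≤ ‖a - r‖

/-- Edge of the Equilateral Delaunay triangulation `EDT_l(P)`: there is an `l`-tri,
empty with respect to `P`, with both endpoints on its boundary. -/
def EDT (P : Finset E) (l : Fin 6) (p q : E) : Prop :=
  p ∈ P ∧ q ∈ P ∧ p ≠ q ∧ ∃ c : E, ∃ lam : ℝ, 0 < lam ∧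
    p ∈ frontier (lTri l c lam) ∧ q ∈ frontier (lTri l c lam) ∧
    ∀ r ∈ P, r ∉ interior (lTri l c lam)

/-- Edge of the Equilateral Delaunay graph `EDG(P) = EDT_0(P) ∪ EDT_1(P)`. -/
def EDG (P : Finset E) (p q : E) : Prop := EDT P 0 p q ∨ EDT P 1 p q

/-- Directed Yao-graph edge from `p` to `q`: `q ∈ V_l(p)` for some `l` and
`‖p - q‖ = min_{r ∈ V_l(p)} ‖p - r‖`. -/
def YG (P : Finset E) (p q : E) : Prop :=
  p ∈ P ∧ ∃ l : Fin 6, q ∈ Vl P l p ∧ ∀ r ∈ Vl P l p, ‖p - q‖ ≤ ‖p - r‖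

/-- Edge of the Pie Delaunay triangulation `PDT_l(P)`: there is an `l`-pie, empty
with respect to `P`, with both endpoints on its boundary. -/
def PDT (P : Finset E) (l : Fin 6) (p q : E) : Prop :=
  p ∈ P ∧ q ∈ P ∧ p ≠ q ∧ ∃ c : E, ∃ lam : ℝ, 0 < lam ∧
    p ∈ frontier (lPie l c lam) ∧ q ∈ frontier (lPie l c lam) ∧
    ∀ r ∈ P, r ∉ interior (lPie l c lam)

/-- Edge of the Pie Delaunay graph `PDG(P) = PDT_0(P) ∪ ⋯ ∪ PDT_5(P)`. -/
def PDG (P : Finset E) (p q : E) : Prop := ∃ l : Fin 6, PDT P l p q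

/-- Total Euclidean edge weight of a graph on the points of `P`. -/
def edgeWeight (P : Finset E) (G : SimpleGraph {x // x ∈ P}) : ℝ :=
  ∑ e ∈ G.edgeSet.toFinite.toFinset,
    Sym2.lift ⟨fun (a b : {x // x ∈ P}) => ‖(a : E) - (b : E)‖,
      fun _ _ => norm_sub_rev _ _⟩ e

/-- `T` is a Euclidean minimum spanning tree of `P`: a spanning tree (connected and
acyclic graph on the vertex set `P`) of minimum total Euclidean edge weight. -/
def IsEMST (P : Finset E) (T : SimpleGraph {x // x ∈ P}) : Prop :=
  T.IsTree ∧ ∀ G : SimpleGraph {x // x ∈ P}, G.IsTree → edgeWeight P T ≤ edgeWeight P G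

/-! Write `u = p_j - p_i` and `v = p_k - p_i`, both in `W_l`. If `⟪v, b_l⟫ < ⟪u, b_l⟫`
then `‖u - v‖ < ‖u‖`, so `p_k` would be closer to `p_j` than its nearest neighbour `p_i`.
In polar form `u = r • dir (lπ/3 + A)`, `v = s • dir (lπ/3 + B)` with `A, B ∈ [-π/6, π/6)`,
the inequality `‖u - v‖ < ‖u‖` reads `s < 2 r cos (A - B)`. It follows from
`s cos B ≤ r cos A` and `cos A + cos (A - 2B) = 2 cos (A - B) cos B`, because the half-open
angle range forces `|A - 2B| < π/2`. -/

lemma inner_pt (a b c d : ℝ) : ⟪pt a b, pt c d⟫ = a * c + b * d := by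
  simp only [pt, WithLp.equiv_symm_apply, PiLp.inner_apply, RCLike.inner_apply, ringHom_apply,
    Fin.sum_univ_two, Fin.isValue, Matrix.cons_val_zero, Matrix.cons_val_one,
    Matrix.cons_val_fin_one]
  ring

lemma inner_dir (α β : ℝ) : ⟪dir α, dir β⟫ = cos (α - β) := by
  simp only [dir, inner_pt, cos_sub]

lemma exists_eq_norm_smul_dir_of_mem_wedge {l : Fin 6} {x : E} (hx : x ∈ wedge l) :
    0 < ‖x‖ ∧ ∃ A, -(π / 6) ≤ A ∧ A < π / 6 ∧ x = ‖x‖ • dir ((l : ℕ) * π / 3 + A) := by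
  obtain ⟨hx0, θ, hlo, hhi, hxθ⟩ := hx
  refine ⟨norm_pos_iff.mpr hx0, θ - (l : ℕ) * π / 3, ?_, ?_, ?_⟩
  · rw [lo] at hlo
    linarith
  · rw [hi] at hhi
    linarith
  · rwa [add_sub_cancel]

lemma lt_two_mul_mul_cos_sub {r s A B : ℝ} (hr : 0 < r)
    (hA₁ : -(π / 6) ≤ A) (hA₂ : A < π / 6) (hB₁ : -(π / 6) ≤ B) (hB₂ : B < π / 6)
    (h : s * cos B ≤ r * cos A) : s < 2 * r * cos (A - B) := by
  have hcosB : 0 < cos B := cos_pos_of_mem_Ioo ⟨by linarith [pi_pos], by linarith [pi_pos]⟩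
  have hcos : 0 < cos (A - 2 * B) := cos_pos_of_mem_Ioo ⟨by linarith, by linarith⟩
  have hsum : cos A + cos (A - 2 * B) = 2 * cos (A - B) * cos B := by
    rw [cos_add_cos]
    ring_nf
  refine lt_of_mul_lt_mul_right ?_ hcosB.le
  calc s * cos B ≤ r * cos A := h
    _ < r * (cos A + cos (A - 2 * B)) := by gcongr; linarith
    _ = 2 * r * cos (A - B) * cos B := by rw [hsum]; ring

lemma norm_sub_lt_norm_of_inner_bvec_le {l : Fin 6} {u v : E} (hu : u ∈ wedge l)
    (hv : v ∈ wedge l) (h : ⟪v, bvec l⟫ ≤ ⟪u, bvec l⟫) : ‖u - v‖ < ‖u‖ := by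
  obtain ⟨hr, A, hA₁, hA₂, hu⟩ := exists_eq_norm_smul_dir_of_mem_wedge hu
  obtain ⟨hs, B, hB₁, hB₂, hv⟩ := exists_eq_norm_smul_dir_of_mem_wedge hv
  set r := ‖u‖
  set s := ‖v‖
  set θ : ℝ := (l : ℕ) * π / 3
  have hb : bvec l = dir θ := rfl
  have huv : ⟪u, v⟫ = r * s * cos (A - B) := by
    rw [hu, hv, real_inner_smul_left, real_inner_smul_right, inner_dir]
    ring_nf
  have hbound : s < 2 * r * cos (A - B) := by
    refine lt_two_mul_mul_cos_sub hr hA₁ hA₂ hB₁ hB₂ ?_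
    rwa [hb, hu, hv, real_inner_smul_left, real_inner_smul_left, inner_dir, inner_dir,
      add_sub_cancel_left, add_sub_cancel_left] at h
  have hsq : ‖u - v‖ ^ 2 < r ^ 2 := by
    rw [norm_sub_sq_real, huv]
    nlinarith [mul_pos hs (sub_pos.mpr hbound)]
  exact lt_of_pow_lt_pow_left₀ 2 hr.le hsq

theorem nearest_neighbor_min_bisector_coordinate_general
    (P : Finset E) (pj pi : E)
    (hnn : ∀ r ∈ P, r ≠ pj → ‖pj - pi‖ ≤ ‖pj - r‖)
    (l : Fin 6) (hw : pj ∈ wedgeAt l pi) :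
    ∀ pk ∈ Vl P l pi, ⟪pj - pi, bvec l⟫ ≤ ⟪pk - pi, bvec l⟫ := by
  rintro pk ⟨hkP, hkw⟩
  by_contra! hlt
  have hkj : pk ≠ pj := ne_of_apply_ne (fun p => ⟪p - pi, bvec l⟫) hlt.ne
  have hcloser : ‖pj - pk‖ < ‖pj - pi‖ := by
    simpa only [sub_sub_sub_cancel_right] using
      norm_sub_lt_norm_of_inner_bvec_le hw hkw hlt.le
  exact (hnn pk hkP hkj).not_gt hcloser

/-- if `p_i` is a nearest neighbor of `p_j` in `P` and `p_j ∈ W_l(p_i)`,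
then `p_j` has the minimum `b_l`-coordinate among the points of `V_l(p_i)`. -/
theorem nearest_neighbor_min_bisector_coordinate
    (P : Finset E) (pj pi : E) (hj : pj ∈ P) (hi : pi ∈ P) (hne : pi ≠ pj)
    (hnn : ∀ r ∈ P, r ≠ pj → ‖pj - pi‖ ≤ ‖pj - r‖)
    (l : Fin 6) (hw : pj ∈ wedgeAt l pi) :
    ∀ pk ∈ Vl P l pi, ⟪pj - pi, bvec l⟫ ≤ ⟪pk - pi, bvec l⟫ :=
  nearest_neighbor_min_bisector_coordinate_general P pj pi hnn l hw
end
end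

section
/- Let p ∈ ℝ², l ∈ {0,…,5}, and let q, r ∈ W_l(p). If ⟨r − p, b_l⟩ < ⟨q − p, b_l⟩, then ‖q − r‖ < ‖p − q‖. -/
/- Common geometric setup: the Euclidean plane, wedges `W_l`, bisectors `b_l`,
equilateral triangles `∆_l` and `l`-tri's, circular sectors `σ_l` and `l`-pies,
and the proximity graphs (Semi-Yao, nearest-neighbor, Equilateral/Pie Delaunay,
Yao) together with Euclidean minimum spanning trees. -/

open Real EuclideanGeometry
open scoped RealInnerProductSpace

noncomputable section

/-! Write `v = q - p`, `w = r - p` and `s > t` for their coordinates along the unit bisector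
`b_l`; both vectors lie in the cone of half-angle `π/6` about `b_l`, so `t > 0`. Cauchy–Schwarz
on the components orthogonal to `b_l` gives `⟪v, w⟫ ≥ 2st/3`, and `‖w‖² ≤ 4t²/3`, hence
`‖v - w‖² ≤ ‖v‖² - 4t(s - t)/3 < ‖v‖²`. -/

section Cone

variable {F : Type*} [NormedAddCommGroup F] [InnerProductSpace ℝ F] {e : F}

/-- Cauchy–Schwarz for the components of `v` and `w` orthogonal to the unit vector `e`. -/
lemma sq_inner_sub_inner_mul_inner_le (he : ‖e‖ = 1) (v w : F) :
    (⟪v, w⟫ - ⟪v, e⟫ * ⟪w, e⟫) ^ 2 ≤ (‖v‖ ^ 2 - ⟪v, e⟫ ^ 2) * (‖w‖ ^ 2 - ⟪w, e⟫ ^ 2) := by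
  have hee : ⟪e, e⟫ = 1 := by rw [real_inner_self_eq_norm_sq, he, one_pow]
  have hcs := real_inner_mul_inner_self_le (v - ⟪v, e⟫ • e) (w - ⟪w, e⟫ • e)
  simp only [inner_sub_left, inner_sub_right, real_inner_smul_left, real_inner_smul_right,
    hee] at hcs
  rw [real_inner_comm v e, real_inner_comm w e] at hcs
  rw [← real_inner_self_eq_norm_sq, ← real_inner_self_eq_norm_sq]
  nlinarith [hcs]

lemma norm_sq_le_of_cos_pi_div_six_mul_norm_le {v : F} (hv : cos (π / 6) * ‖v‖ ≤ ⟪v, e⟫) :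
    3 * ‖v‖ ^ 2 ≤ 4 * ⟪v, e⟫ ^ 2 := by
  have h0 : 0 ≤ cos (π / 6) * ‖v‖ := by rw [cos_pi_div_six]; positivity
  nlinarith [sq_cos_pi_div_six, mul_self_le_mul_self h0 hv]

lemma norm_sub_lt_norm_of_inner_lt {v w : F} (he : ‖e‖ = 1)
    (hv : cos (π / 6) * ‖v‖ ≤ ⟪v, e⟫) (hw : cos (π / 6) * ‖w‖ ≤ ⟪w, e⟫) (hw0 : w ≠ 0)
    (h : ⟪w, e⟫ < ⟪v, e⟫) : ‖v - w‖ < ‖v‖ := by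
  set s := ⟪v, e⟫
  set t := ⟪w, e⟫
  have ht : 0 < t := lt_of_lt_of_le
    (mul_pos (by rw [cos_pi_div_six]; positivity) (norm_pos_iff.mpr hw0)) hw
  have hvs := norm_sq_le_of_cos_pi_div_six_mul_norm_le hv
  have hwt := norm_sq_le_of_cos_pi_div_six_mul_norm_le hw
  have hcs := sq_inner_sub_inner_mul_inner_le he v w
  have hinner : 2 * s * t ≤ 3 * ⟪v, w⟫ := by
    have hprod : (‖v‖ ^ 2 - s ^ 2) * (‖w‖ ^ 2 - t ^ 2) ≤ (s * t / 3) ^ 2 := by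
      have hv_orth : ‖v‖ ^ 2 - s ^ 2 ≤ s ^ 2 / 3 := by linarith
      have hw_orth : ‖w‖ ^ 2 - t ^ 2 ≤ t ^ 2 / 3 := by linarith
      have hw_orth_nonneg : 0 ≤ ‖w‖ ^ 2 - t ^ 2 := by
        have hcs₁ := abs_real_inner_le_norm w e
        rw [he, mul_one] at hcs₁
        nlinarith [sq_abs t, abs_nonneg t]
      calc (‖v‖ ^ 2 - s ^ 2) * (‖w‖ ^ 2 - t ^ 2) ≤ s ^ 2 / 3 * (t ^ 2 / 3) :=
            mul_le_mul hv_orth hw_orth hw_orth_nonneg (by positivity)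
        _ = (s * t / 3) ^ 2 := by ring
    nlinarith [abs_le_of_sq_le_sq' (hcs.trans hprod)
      (div_nonneg (mul_pos (ht.trans h) ht).le zero_le_three)]
  have hsq : ‖v - w‖ ^ 2 < ‖v‖ ^ 2 := by
    rw [norm_sub_sq_real]
    nlinarith [mul_pos ht (sub_pos.mpr h)]
  exact lt_of_pow_lt_pow_left₀ 2 (norm_nonneg v) hsq

end Cone

lemma inner_dir_dir (θ φ : ℝ) : ⟪dir θ, dir φ⟫ = cos (θ - φ) := by
  simp [dir, pt, PiLp.inner_apply, Fin.sum_univ_two, cos_sub, mul_comm]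

lemma norm_bvec (l : Fin 6) : ‖bvec l‖ = 1 := by
  rw [← pow_eq_one_iff_of_nonneg (norm_nonneg _) two_ne_zero, ← real_inner_self_eq_norm_sq, bvec,
    inner_dir_dir, sub_self, cos_zero]

lemma cos_pi_div_six_mul_norm_le_inner_bvec {l : Fin 6} {x : E} (hx : x ∈ wedge l) :
    cos (π / 6) * ‖x‖ ≤ ⟪x, bvec l⟫ := by
  obtain ⟨-, θ, hlo, hhi, hθ⟩ := hx
  set β : ℝ := ((l : ℕ) : ℝ) * π / 3
  have hdev : |θ - β| ≤ π / 6 := by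
    rw [abs_le]; constructor <;> linarith [show lo l = β - π / 6 by simp only [lo, β]; ring,
      show hi l = β + π / 6 by simp only [hi, β]; ring]
  have hcos : cos (π / 6) ≤ cos (θ - β) := by
    rw [← cos_abs (θ - β)]
    exact cos_le_cos_of_nonneg_of_le_pi (abs_nonneg _) (by linarith [pi_pos]) hdev
  calc cos (π / 6) * ‖x‖ ≤ ‖x‖ * cos (θ - β) := by
        rw [mul_comm]; exact mul_le_mul_of_nonneg_left hcos (norm_nonneg x)
    _ = ⟪x, bvec l⟫ := by
        conv_rhs => rw [hθ]
        rw [real_inner_smul_left, bvec, inner_dir_dir]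

/-- if `q, r ∈ W_l(p)` and `⟨r - p, b_l⟩ < ⟨q - p, b_l⟩`,
then `‖q - r‖ < ‖p - q‖`. -/
theorem smaller_bisector_coordinate_closer (p q r : E) (l : Fin 6)
    (hq : q ∈ wedgeAt l p) (hr : r ∈ wedgeAt l p)
    (h : ⟪r - p, bvec l⟫ < ⟪q - p, bvec l⟫) : ‖q - r‖ < ‖p - q‖ := by
  have hclose := norm_sub_lt_norm_of_inner_lt (norm_bvec l)
    (cos_pi_div_six_mul_norm_le_inner_bvec hq) (cos_pi_div_six_mul_norm_le_inner_bvec hr) hr.1 h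
  rwa [sub_sub_sub_cancel_right, ← norm_sub_rev p q] at hclose
end
end

section
/- Let P ⊆ ℝ² be finite, let p, q ∈ P be distinct, and let l ∈ {0,…,5}. If there exists an l-tri that is empty with respect to P and has both p and q on its boundary, then there exists an l-tri T′ that is empty with respect to P, has both p and q on its boundary, and has p or q as one of its three vertices. -/
/- Common geometric setup: the Euclidean plane, wedges `W_l`, bisectors `b_l`,
equilateral triangles `∆_l` and `l`-tri's, circular sectors `σ_l` and `l`-pies,
and the proximity graphs (Semi-Yao, nearest-neighbor, Equilateral/Pie Delaunay,
Yao) together with Euclidean minimum spanning trees. -/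

open Real EuclideanGeometry
open scoped RealInnerProductSpace

noncomputable section

/-! Two boundary points of a triangle lie on two of its edges, and any two edges share a vertex
`V`: say `p ∈ [V, A]` and `q ∈ [V, B]`. Shrinking the triangle towards `V` just enough to keep
both points gives a homothetic copy inside the original one, so it is still empty and `p`, `q`
remain on its boundary; the farther of the two points is the image of `A` or `B`, a vertex. -/

open Set AffineMap

theorem mem_frontier_of_subset {X : Type*} [TopologicalSpace X] {s t : Set X} {x : X}
    (hst : s ⊆ t) (hxs : x ∈ s) (hxt : x ∈ frontier t) : x ∈ frontier s :=
  ⟨subset_closure hxs, fun hx => hxt.2 (interior_mono hst hx)⟩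

section Simplex

variable {F : Type*} [NormedAddCommGroup F] [NormedSpace ℝ F]

theorem AffineBasis.exists_coord_eq_zero_of_mem_frontier {ι : Type*} [Finite ι]
    (b : AffineBasis ι ℝ F) {x : F} (hx : x ∈ frontier (convexHull ℝ (range b))) :
    x ∈ convexHull ℝ (range b) ∧ ∃ i, b.coord i x = 0 := by
  have hclosed : IsClosed (convexHull ℝ (range b)) :=
    ((finite_range b).isCompact_convexHull (𝕜 := ℝ)).isClosed
  rw [hclosed.frontier_eq, b.interior_convexHull] at hx
  obtain ⟨hmem, hnot⟩ := hx
  have hnonneg := b.convexHull_eq_nonneg_coord ▸ hmem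
  simp only [mem_ofPred_eq, not_forall, not_lt] at hnot
  obtain ⟨i, hi⟩ := hnot
  exact ⟨hmem, i, le_antisymm hi (hnonneg i)⟩

theorem AffineBasis.exists_mem_segment_of_coord_eq_zero (b : AffineBasis (Fin 3) ℝ F) {x : F}
    (hx : x ∈ convexHull ℝ (range b)) {i m : Fin 3} (hm : b.coord m x = 0) (him : i ≠ m) :
    ∃ j, x ∈ segment ℝ (b i) (b j) := by
  have third : ∀ i m : Fin 3, i ≠ m → ∃ j, j ≠ i ∧ ∀ k, k ≠ i ∧ k ≠ j → k = m := by decide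
  obtain ⟨j, hji, hk⟩ := third i m him
  have hnonneg := b.convexHull_eq_nonneg_coord ▸ hx
  have hzero : ∀ k ∈ Finset.univ, k ≠ i ∧ k ≠ j → b.coord k x = 0 := fun k _ h => hk k h ▸ hm
  refine ⟨j, b.coord i x, b.coord j x, hnonneg i, hnonneg j, ?_, ?_⟩
  · rw [← Finset.sum_eq_add_of_mem i j (Finset.mem_univ _) (Finset.mem_univ _) hji.symm hzero,
      b.sum_coord_apply_eq_one]
  · rw [← Finset.sum_eq_add_of_mem (f := fun k => b.coord k x • b k) i j (Finset.mem_univ _)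
      (Finset.mem_univ _) hji.symm (fun k hk h => by rw [hzero k hk h, zero_smul]),
      b.linear_combination_coord_eq_self]

theorem AffineBasis.exists_mem_segment_mem_segment_of_mem_frontier
    (b : AffineBasis (Fin 3) ℝ F) {x y : F} (hx : x ∈ frontier (convexHull ℝ (range b)))
    (hy : y ∈ frontier (convexHull ℝ (range b))) :
    ∃ i j k, x ∈ segment ℝ (b i) (b j) ∧ y ∈ segment ℝ (b i) (b k) := by
  obtain ⟨hxT, m, hm⟩ := b.exists_coord_eq_zero_of_mem_frontier hx
  obtain ⟨hyT, n, hn⟩ := b.exists_coord_eq_zero_of_mem_frontier hy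
  have avoid : ∀ m n : Fin 3, ∃ i, i ≠ m ∧ i ≠ n := by decide
  obtain ⟨i, him, hin⟩ := avoid m n
  obtain ⟨j, hj⟩ := b.exists_mem_segment_of_coord_eq_zero hxT hm him
  obtain ⟨k, hk⟩ := b.exists_mem_segment_of_coord_eq_zero hyT hn hin
  exact ⟨i, j, k, hj, hk⟩

end Simplex

section Homothety

variable {F : Type*} [AddCommGroup F] [Module ℝ F]

theorem Convex.homothety_image_subset {S : Set F} (hS : Convex ℝ S) {V : F} (hV : V ∈ S)
    {s : ℝ} (hs0 : 0 ≤ s) (hs1 : s ≤ 1) : homothety V s '' S ⊆ S := by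
  rintro _ ⟨y, hy, rfl⟩
  rw [homothety_eq_lineMap]
  exact hS.lineMap_mem hV hy ⟨hs0, hs1⟩

theorem homothety_image_image_add_smul (V c : F) (s lam : ℝ) (X : Set F) :
    homothety V s '' ((fun x => c + lam • x) '' X) =
      (fun x => homothety V s c + (s * lam) • x) '' X := by
  rw [image_image]
  congr 1 with x
  simp only [homothety_apply, vsub_eq_sub, vadd_eq_add, smul_add, smul_sub, mul_smul]
  abel

theorem Convex.exists_homothety_of_mem_segment {S K : Set F} (hS : Convex ℝ S) (hK : K ⊆ S)
    {V A B p q : F} (hV : V ∈ K) (hA : A ∈ K) (hB : B ∈ K)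
    (hp : p ∈ segment ℝ V A) (hq : q ∈ segment ℝ V B) :
    ∃ s : ℝ, 0 < s ∧ s ≤ 1 ∧ p ∈ homothety V s '' S ∧ q ∈ homothety V s '' S ∧
      (p ∈ homothety V s '' K ∨ q ∈ homothety V s '' K) := by
  rw [segment_eq_image_lineMap] at hp hq
  obtain ⟨t, ht, rfl⟩ := hp
  obtain ⟨u, hu, rfl⟩ := hq
  wlog htu : t ≤ u generalizing A B t u
  · obtain ⟨s, hs0, hs1, hq, hp, hv⟩ := this hB hA u hu t ht (le_of_not_ge htu)
    exact ⟨s, hs0, hs1, hp, hq, hv.symm⟩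
  rcases hu.1.eq_or_lt with rfl | hu0
  · obtain rfl : t = 0 := le_antisymm htu ht.1
    exact ⟨1, one_pos, le_rfl, ⟨V, hK hV, by simp⟩, ⟨V, hK hV, by simp⟩, Or.inl ⟨V, hV, by simp⟩⟩
  · have hAS : lineMap V A (t / u) ∈ S :=
      hS.lineMap_mem (hK hV) (hK hA) ⟨div_nonneg ht.1 hu0.le, div_le_one_of_le₀ htu hu0.le⟩
    refine ⟨u, hu0, hu.2, ⟨_, hAS, ?_⟩, ⟨B, hK hB, homothety_eq_lineMap _ _ _⟩,
      Or.inr ⟨B, hB, homothety_eq_lineMap _ _ _⟩⟩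
    rw [homothety_eq_lineMap, lineMap_lineMap_right, mul_div_cancel₀ _ hu0.ne']

end Homothety

theorem hi_sub_lo (l : Fin 6) : hi l - lo l = π / 3 := by
  unfold hi lo; ring

theorem affineIndependent_zero_dir_dir {θ φ : ℝ} (h : sin (φ - θ) ≠ 0) :
    AffineIndependent ℝ ![(0 : E), dir θ, dir φ] := by
  rw [affineIndependent_iff_not_collinear_set, collinear_iff_of_mem (mem_insert _ _)]
  rintro ⟨v, hv⟩
  have coords : ∀ α, dir α ∈ ({0, dir θ, dir φ} : Set E) →
      ∃ r : ℝ, cos α = r * v 0 ∧ sin α = r * v 1 := fun α hα => by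
    obtain ⟨r, hr⟩ := hv _ hα
    refine ⟨r, ?_, ?_⟩
    · simpa [dir, pt] using congrArg (· 0) hr
    · simpa [dir, pt] using congrArg (· 1) hr
  obtain ⟨a, hca, hsa⟩ := coords θ (by simp)
  obtain ⟨b, hcb, hsb⟩ := coords φ (by simp)
  exact h (by rw [sin_sub, hca, hsa, hcb, hsb]; ring)

def triBasis (l : Fin 6) : AffineBasis (Fin 3) ℝ E :=
  have hind : AffineIndependent ℝ ![(0 : E), dir (lo l), dir (hi l)] :=
    affineIndependent_zero_dir_dir (by rw [hi_sub_lo, sin_pi_div_three]; positivity)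
  ⟨_, hind, hind.affineSpan_eq_top_iff_card_eq_finrank_add_one.mpr (by simp)⟩

def lTriBasis (l : Fin 6) (c : E) {lam : ℝ} (hlam : lam ≠ 0) : AffineBasis (Fin 3) ℝ E :=
  c +ᵥ Units.mk0 lam hlam • triBasis l

theorem range_lTriBasis (l : Fin 6) (c : E) {lam : ℝ} (hlam : lam ≠ 0) :
    range (lTriBasis l c hlam) = (fun x => c + lam • x) '' triVerts l := by
  have hrange : range (triBasis l) = triVerts l := by
    change range ![(0 : E), dir (lo l), dir (hi l)] = _
    rw [Matrix.range_cons, Matrix.range_cons_cons_empty]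
    rfl
  rw [← hrange, ← range_comp]
  rfl

theorem convexHull_range_lTriBasis (l : Fin 6) (c : E) {lam : ℝ} (hlam : lam ≠ 0) :
    convexHull ℝ (range (lTriBasis l c hlam)) = lTri l c lam := by
  let f : E →ᵃ[ℝ] E :=
    (AffineEquiv.constVAdd ℝ E c).toAffineMap.comp (lam • LinearMap.id).toAffineMap
  rw [range_lTriBasis, lTri, tri]
  exact (f.image_convexHull _).symm

theorem empty_lTri_can_have_point_as_vertex_general
    (P : Finset E) (p q : E) (l : Fin 6)
    (h : ∃ c : E, ∃ lam : ℝ, 0 < lam ∧ (∀ r ∈ P, r ∉ interior (lTri l c lam)) ∧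
      p ∈ frontier (lTri l c lam) ∧ q ∈ frontier (lTri l c lam)) :
    ∃ c : E, ∃ lam : ℝ, 0 < lam ∧ (∀ r ∈ P, r ∉ interior (lTri l c lam)) ∧
      p ∈ frontier (lTri l c lam) ∧ q ∈ frontier (lTri l c lam) ∧
      (p ∈ (fun x => c + lam • x) '' triVerts l ∨
        q ∈ (fun x => c + lam • x) '' triVerts l) := by
  obtain ⟨c, lam, hlam, hempty, hpT, hqT⟩ := h
  set b := lTriBasis l c hlam.ne'
  have hT : convexHull ℝ (range b) = lTri l c lam := convexHull_range_lTriBasis l c hlam.ne'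
  have hconvex : Convex ℝ (lTri l c lam) := hT ▸ convex_convexHull ℝ _
  have hK : range b ⊆ lTri l c lam := hT ▸ subset_convexHull ℝ _
  obtain ⟨i, j, k, hp, hq⟩ :=
    b.exists_mem_segment_mem_segment_of_mem_frontier (hT ▸ hpT) (hT ▸ hqT)
  obtain ⟨s, hs0, hs1, hpT', hqT', hvertex⟩ :=
    hconvex.exists_homothety_of_mem_segment hK (mem_range_self i) (mem_range_self j)
      (mem_range_self k) hp hq
  have hsub := hconvex.homothety_image_subset (hK (mem_range_self i)) hs0.le hs1
  rw [lTri, homothety_image_image_add_smul, ← lTri] at hpT' hqT' hsub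
  rw [range_lTriBasis, homothety_image_image_add_smul] at hvertex
  exact ⟨_, _, mul_pos hs0 hlam, fun r hr hri => hempty r hr (interior_mono hsub hri),
    mem_frontier_of_subset hsub hpT' hpT, mem_frontier_of_subset hsub hqT' hqT, hvertex⟩

/-- if some empty `l`-tri has both `p` and `q` on its boundary, then there
is an empty `l`-tri having both on its boundary and `p` or `q` among its three vertices. -/
theorem empty_lTri_can_have_point_as_vertex
    (P : Finset E) (p q : E) (hp : p ∈ P) (hq : q ∈ P) (hne : p ≠ q) (l : Fin 6)
    (h : ∃ c : E, ∃ lam : ℝ, 0 < lam ∧ (∀ r ∈ P, r ∉ interior (lTri l c lam)) ∧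
      p ∈ frontier (lTri l c lam) ∧ q ∈ frontier (lTri l c lam)) :
    ∃ c : E, ∃ lam : ℝ, 0 < lam ∧ (∀ r ∈ P, r ∉ interior (lTri l c lam)) ∧
      p ∈ frontier (lTri l c lam) ∧ q ∈ frontier (lTri l c lam) ∧
      (p ∈ (fun x => c + lam • x) '' triVerts l ∨
        q ∈ (fun x => c + lam • x) '' triVerts l) :=
  empty_lTri_can_have_point_as_vertex_general P p q l h
end
end

section
/- Let T = c + λ∆_l (with c ∈ ℝ², λ > 0) be an l-tri and let v be one of its three vertices. Then there exists k ∈ {l, (l+2) mod 6, (l+4) mod 6} such that T ⊆ v + closure(W_k); moreover, if v = c (the vertex of T corresponding to the vertex 0 of ∆_l), then one may take k = l. -/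
/- Common geometric setup: the Euclidean plane, wedges `W_l`, bisectors `b_l`,
equilateral triangles `∆_l` and `l`-tri's, circular sectors `σ_l` and `l`-pies,
and the proximity graphs (Semi-Yao, nearest-neighbor, Equilateral/Pie Delaunay,
Yao) together with Euclidean minimum spanning trees. -/

open Real EuclideanGeometry
open scoped RealInnerProductSpace

noncomputable section

/-!
At a vertex of `∆_l` the two edges leave in the directions of the boundary rays of one wedge:
from `0` along `dir (lo l)` and `dir (hi l)`, from `dir (lo l)` along `dir (lo (l + 2))` and
`dir (hi (l + 2))`, from `dir (hi l)` along `dir (lo (l + 4))` and `dir (hi (l + 4))`. So the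
triangle lies in the closed cone spanned by these two rays at that vertex. A combination
`s • dir (lo k) + t • dir (hi k)` with `s > 0` and `t ≥ 0` has polar angle `lo k + γ` with
`γ = arctan (√3 t / (2 s + t)) ∈ [0, π / 3)`, so it lies in `W_k`; letting `s` vary shows the
whole closed cone lies in the closure of `W_k`.
-/

open Real EuclideanGeometry Filter Topology

lemma dir_apply_zero (θ : ℝ) : dir θ 0 = cos θ := rfl

lemma dir_apply_one (θ : ℝ) : dir θ 1 = sin θ := rfl

lemma ext_of_apply_zero_of_apply_one {x y : E} (h0 : x 0 = y 0) (h1 : x 1 = y 1) : x = y := by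
  ext i
  fin_cases i
  exacts [h0, h1]

lemma norm_dir (θ : ℝ) : ‖dir θ‖ = 1 := by
  rw [EuclideanSpace.norm_eq, Fin.sum_univ_two, dir_apply_zero, dir_apply_one,
    Real.norm_eq_abs, Real.norm_eq_abs, sq_abs, sq_abs, cos_sq_add_sin_sq, sqrt_one]

lemma dir_add (a b : ℝ) : dir (a + b) = cos b • dir a + sin b • dir (a + π / 2) := by
  apply ext_of_apply_zero_of_apply_one <;>
    simp only [PiLp.add_apply, PiLp.smul_apply, smul_eq_mul, dir_apply_zero, dir_apply_one,
      cos_add, sin_add, cos_pi_div_two, sin_pi_div_two] <;> ring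

lemma dir_add_pi (θ : ℝ) : dir (θ + π) = -dir θ := by
  apply ext_of_apply_zero_of_apply_one <;> simp [dir_apply_zero, dir_apply_one]

lemma dir_add_int_mul_two_pi (θ : ℝ) (m : ℤ) : dir (θ + m * (2 * π)) = dir θ := by
  apply ext_of_apply_zero_of_apply_one <;>
    simp [dir_apply_zero, dir_apply_one, cos_add_int_mul_two_pi, sin_add_int_mul_two_pi]

lemma dir_add_two_pi_div_three (θ : ℝ) : dir (θ + 2 * π / 3) = dir (θ + π / 3) - dir θ := by
  have h3 : √3 ^ 2 = 3 := sq_sqrt (by norm_num)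
  rw [show θ + 2 * π / 3 = θ + π / 3 + π / 3 by ring, dir_add, dir_add θ (π / 3),
    show θ + π / 3 + π / 2 = θ + π / 2 + π / 3 by ring, dir_add (θ + π / 2),
    show θ + π / 2 + π / 2 = θ + π by ring, dir_add_pi, cos_pi_div_three, sin_pi_div_three]
  match_scalars
  · linear_combination (-1 / 4 : ℝ) * h3
  · ring

lemma smul_dir_add_arctan {X : ℝ} (hX : 0 < X) (Y a : ℝ) :
    X • dir a + Y • dir (a + π / 2) =
      (X * √(1 + (Y / X) ^ 2)) • dir (a + arctan (Y / X)) := by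
  have hsqrt : 0 < √(1 + (Y / X) ^ 2) := sqrt_pos.2 (by positivity)
  rw [dir_add a (arctan (Y / X)), cos_arctan, sin_arctan, smul_add, smul_smul, smul_smul]
  congr 2 <;> field_simp

lemma hi_eq_lo_add (k : Fin 6) : hi k = lo k + π / 3 := by unfold lo hi; ring

lemma exists_lo_add_eq (l j : Fin 6) :
    ∃ m : ℤ, lo (l + j) = lo l + ((j : ℕ) : ℝ) * (π / 3) + m * (2 * π) := by
  set n := ((l : ℕ) + j) / 6
  refine ⟨-n, ?_⟩
  have hdiv : ((((l : ℕ) + j) % 6 : ℕ) : ℝ) + 6 * (n : ℝ) = l + j := by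
    exact_mod_cast Nat.mod_add_div ((l : ℕ) + j) 6
  unfold lo
  rw [Fin.val_add, Int.cast_neg, Int.cast_natCast]
  linear_combination (π / 3) * hdiv

lemma dir_lo_add_add (l j : Fin 6) (θ : ℝ) :
    dir (lo (l + j) + θ) = dir (lo l + θ + ((j : ℕ) : ℝ) * (π / 3)) := by
  obtain ⟨m, hm⟩ := exists_lo_add_eq l j
  rw [hm, add_right_comm, add_right_comm (lo l), dir_add_int_mul_two_pi]

lemma dir_lo_add_two (l : Fin 6) : dir (lo (l + 2)) = dir (hi l) - dir (lo l) := by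
  rw [← add_zero (lo (l + 2)), dir_lo_add_add, hi_eq_lo_add, ← dir_add_two_pi_div_three]
  congr 1
  norm_num
  ring

lemma dir_hi_add_two (l : Fin 6) : dir (hi (l + 2)) = -dir (lo l) := by
  rw [hi_eq_lo_add, dir_lo_add_add, ← dir_add_pi]
  congr 1
  norm_num
  ring

lemma dir_lo_add_four (l : Fin 6) : dir (lo (l + 4)) = -dir (hi l) := by
  rw [← add_zero (lo (l + 4)), dir_lo_add_add, hi_eq_lo_add, ← dir_add_pi]
  congr 1
  norm_num
  ring

lemma dir_hi_add_four (l : Fin 6) : dir (hi (l + 4)) = dir (lo l) - dir (hi l) := by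
  rw [hi_eq_lo_add, dir_lo_add_add, hi_eq_lo_add, ← neg_sub, ← dir_add_two_pi_div_three,
    ← dir_add_pi]
  congr 1
  norm_num
  ring

lemma smul_dir_mem_wedge {k : Fin 6} {r θ : ℝ} (hr : 0 < r) (h₁ : lo k ≤ θ)
    (h₂ : θ < hi k) :
    r • dir θ ∈ wedge k := by
  have hnorm : ‖r • dir θ‖ = r := by rw [norm_smul, norm_dir, mul_one, norm_of_nonneg hr.le]
  refine ⟨fun h ↦ ?_, θ, h₁, h₂, by rw [hnorm]⟩
  rw [← hnorm, h, norm_zero] at hr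
  exact lt_irrefl 0 hr

lemma add_smul_dir_mem_wedge (k : Fin 6) {s t : ℝ} (hs : 0 < s) (ht : 0 ≤ t) :
    s • dir (lo k) + t • dir (hi k) ∈ wedge k := by
  have hX : 0 < s + t / 2 := by linarith
  set y := √3 / 2 * t / (s + t / 2)
  have hy : 0 ≤ y := by positivity
  have hy3 : y < √3 := by
    rw [div_lt_iff₀ hX]
    nlinarith [sqrt_pos.2 (show (0 : ℝ) < 3 by norm_num)]
  have hcomb : s • dir (lo k) + t • dir (hi k)
      = (s + t / 2) • dir (lo k) + (√3 / 2 * t) • dir (lo k + π / 2) := by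
    rw [hi_eq_lo_add, dir_add, cos_pi_div_three, sin_pi_div_three]
    module
  rw [hcomb, smul_dir_add_arctan hX]
  refine smul_dir_mem_wedge (by positivity) ?_ ?_
  · linarith [arctan_nonneg.2 hy]
  · rw [hi_eq_lo_add]
    linarith [arctan_strictMono hy3, arctan_sqrt_three]

def closedCone (k : Fin 6) : Set E :=
  {x | ∃ s t : ℝ, 0 ≤ s ∧ 0 ≤ t ∧ x = s • dir (lo k) + t • dir (hi k)}

lemma closedCone_subset_closure_wedge (k : Fin 6) : closedCone k ⊆ closure (wedge k) := by
  rintro _ ⟨s, t, hs, ht, rfl⟩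
  have hlim : Tendsto (fun ε : ℝ ↦ (s + ε) • dir (lo k) + t • dir (hi k)) (𝓝[>] 0)
      (𝓝 (s • dir (lo k) + t • dir (hi k))) := by
    exact Continuous.tendsto' (by fun_prop) _ _ (by simp) |>.mono_left nhdsWithin_le_nhds
  refine mem_closure_of_tendsto hlim (eventually_nhdsWithin_of_forall fun ε hε ↦ ?_)
  exact add_smul_dir_mem_wedge k (add_pos_of_nonneg_of_pos hs hε) ht

lemma smul_mem_closedCone {k : Fin 6} {a : ℝ} (ha : 0 ≤ a) {x : E} (hx : x ∈ closedCone k) :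
    a • x ∈ closedCone k := by
  obtain ⟨s, t, hs, ht, rfl⟩ := hx
  exact ⟨a * s, a * t, mul_nonneg ha hs, mul_nonneg ha ht, by module⟩

lemma exists_eq_of_mem_tri {l : Fin 6} {u : E} (hu : u ∈ tri l) :
    ∃ p q : ℝ, 0 ≤ p ∧ 0 ≤ q ∧ p + q ≤ 1 ∧
      u = p • dir (lo l) + q • dir (hi l) := by
  refine convexHull_min (t := {u | ∃ p q : ℝ, 0 ≤ p ∧ 0 ≤ q ∧ p + q ≤ 1 ∧
    u = p • dir (lo l) + q • dir (hi l)}) ?_ ?_ hu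
  · rintro x (rfl | rfl | rfl)
    · exact ⟨0, 0, le_rfl, le_rfl, by norm_num, by simp⟩
    · exact ⟨1, 0, zero_le_one, le_rfl, by norm_num, by simp⟩
    · exact ⟨0, 1, le_rfl, zero_le_one, by norm_num, by simp⟩
  · rintro _ ⟨p, q, hp, hq, hpq, rfl⟩ _ ⟨p', q', hp', hq', hpq', rfl⟩ a b ha hb hab
    exact ⟨a * p + b * p', a * q + b * q', by positivity, by positivity, by nlinarith,
      by module⟩

lemma tri_subset_closedCone (l : Fin 6) : tri l ⊆ closedCone l := fun u hu ↦ by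
  obtain ⟨p, q, hp, hq, -, rfl⟩ := exists_eq_of_mem_tri hu
  exact ⟨p, q, hp, hq, rfl⟩

lemma sub_dir_lo_mem_closedCone {l : Fin 6} {u : E} (hu : u ∈ tri l) :
    u - dir (lo l) ∈ closedCone (l + 2) := by
  obtain ⟨p, q, hp, hq, hpq, rfl⟩ := exists_eq_of_mem_tri hu
  refine ⟨q, 1 - p - q, hq, by linarith, ?_⟩
  rw [dir_lo_add_two, dir_hi_add_two]
  module

lemma sub_dir_hi_mem_closedCone {l : Fin 6} {u : E} (hu : u ∈ tri l) :
    u - dir (hi l) ∈ closedCone (l + 4) := by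
  obtain ⟨p, q, hp, hq, hpq, rfl⟩ := exists_eq_of_mem_tri hu
  refine ⟨1 - p - q, p, by linarith, hp, ?_⟩
  rw [dir_lo_add_four, dir_hi_add_four]
  module

lemma lTri_subset_closure_wedge {l k : Fin 6} {c w : E} {lam : ℝ} (hlam : 0 ≤ lam)
    (h : ∀ u ∈ tri l, u - w ∈ closedCone k) :
    lTri l c lam ⊆ {x | x - (c + lam • w) ∈ closure (wedge k)} := by
  rintro _ ⟨u, hu, rfl⟩
  show c + lam • u - (c + lam • w) ∈ closure (wedge k)
  rw [show c + lam • u - (c + lam • w) = lam • (u - w) by module]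
  exact closedCone_subset_closure_wedge k (smul_mem_closedCone hlam (h u hu))

/-- if `v` is a vertex of the `l`-tri `c + lam • ∆_l`, then the `l`-tri is
contained in `v + closure (W_k)` for some `k ∈ {l, (l+2) mod 6, (l+4) mod 6}`; moreover
if `v = c` one may take `k = l`. -/
theorem lTri_subset_closed_wedge_of_vertex
    (l : Fin 6) (c : E) (lam : ℝ) (hlam : 0 < lam) (v : E)
    (hv : v ∈ (fun x => c + lam • x) '' triVerts l) :
    (∃ k : Fin 6, (k = l ∨ k = l + 2 ∨ k = l + 4) ∧
      lTri l c lam ⊆ {x | x - v ∈ closure (wedge k)}) ∧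
    (v = c → lTri l c lam ⊆ {x | x - c ∈ closure (wedge l)}) := by
  have hapex : lTri l c lam ⊆ {x | x - (c + lam • 0) ∈ closure (wedge l)} :=
    lTri_subset_closure_wedge hlam.le fun u hu ↦ by simpa using tri_subset_closedCone l hu
  refine ⟨?_, fun _ ↦ by simpa using hapex⟩
  obtain ⟨_, rfl | rfl | rfl, rfl⟩ := hv
  · exact ⟨l, .inl rfl, hapex⟩
  · exact ⟨l + 2, .inr (.inl rfl),
      lTri_subset_closure_wedge hlam.le fun _ ↦ sub_dir_lo_mem_closedCone⟩
  · exact ⟨l + 4, .inr (.inr rfl),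
      lTri_subset_closure_wedge hlam.le fun _ ↦ sub_dir_hi_mem_closedCone⟩
end
end

section
/- Let P ⊆ ℝ² be finite, let T be a Euclidean minimum spanning tree of P, and let {p_i, p_j} be an edge of T. Let P₁ and P₂ be the vertex sets of the two connected components of the graph obtained from T by deleting the edge {p_i, p_j}, with p_i ∈ P₁ and p_j ∈ P₂. If p_r ∈ P satisfies ∠p_j p_i p_r ≤ π/3 and ‖p_i − p_r‖ > ‖p_i − p_j‖ > ‖p_j − p_r‖, then p_r ∈ P₂. -/
/- Common geometric setup: the Euclidean plane, wedges `W_l`, bisectors `b_l`,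
equilateral triangles `∆_l` and `l`-tri's, circular sectors `σ_l` and `l`-pies,
and the proximity graphs (Semi-Yao, nearest-neighbor, Equilateral/Pie Delaunay,
Yao) together with Euclidean minimum spanning trees. -/

open Real EuclideanGeometry
open scoped RealInnerProductSpace

noncomputable section

/- If `p_r` lay on the side of `p_i`, replacing the tree edge `{p_i, p_j}` by `{p_r, p_j}` would
give a spanning tree that is strictly lighter, since `‖p_j - p_r‖ < ‖p_i - p_j‖`. -/

namespace SimpleGraph

variable {V : Type*} {G : SimpleGraph V}

lemma Walk.reachable_deleteEdges_or {u w : V} (p : G.Walk u w) (x : V) :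
    (G.deleteEdges {s(x, w)}).Reachable u x ∨ (G.deleteEdges {s(x, w)}).Reachable u w := by
  induction p with
  | nil => exact Or.inr .rfl
  | @cons u v w huv p ih =>
    by_cases he : s(u, v) = s(x, w)
    · rcases Sym2.eq_iff.mp he with ⟨rfl, -⟩ | ⟨rfl, -⟩
      · exact Or.inl .rfl
      · exact Or.inr .rfl
    · have hadj : (G.deleteEdges {s(x, w)}).Adj u v := by simp [huv, he]
      exact ih.imp hadj.reachable.trans hadj.reachable.trans

lemma Connected.reachable_deleteEdges_or (hG : G.Connected) (u x y : V) :
    (G.deleteEdges {s(x, y)}).Reachable u x ∨ (G.deleteEdges {s(x, y)}).Reachable u y :=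
  (hG.preconnected u y).elim fun p ↦ p.reachable_deleteEdges_or x

lemma IsTree.sup_edge_deleteEdges {T : SimpleGraph V} (hT : T.IsTree) {x y u v : V}
    (hxy : T.Adj x y) (hu : (T.deleteEdges {s(x, y)}).Reachable u x)
    (hv : (T.deleteEdges {s(x, y)}).Reachable v y) :
    (T.deleteEdges {s(x, y)} ⊔ edge u v).IsTree := by
  set T' := T.deleteEdges {s(x, y)}
  have huv : ¬T'.Reachable u v := fun h ↦
    isBridge_iff.mp (isAcyclic_iff_forall_adj_isBridge.mp hT.isAcyclic hxy)
      (hu.symm.trans (h.trans hv))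
  have hne : u ≠ v := fun h ↦ huv (h ▸ .rfl)
  have hxy' : (T' ⊔ edge u v).Reachable x y :=
    (hu.symm.mono le_sup_left).trans <|
      (Adj.reachable (by simp [edge_adj, hne])).trans (hv.mono le_sup_left)
  have hreach (w : V) : (T' ⊔ edge u v).Reachable w y := by
    rcases hT.connected.reachable_deleteEdges_or w x y with h | h
    · exact (h.mono le_sup_left).trans hxy'
    · exact h.mono le_sup_left
  exact .mk ((connected_iff_exists_forall_reachable _).mpr ⟨y, fun w ↦ (hreach w).symm⟩)
    ((hT.isAcyclic.anti (deleteEdges_le _)).sup_edge_of_not_reachable huv)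

end SimpleGraph

open SimpleGraph

section edgeWeight

variable {P : Finset E} {G : SimpleGraph {x // x ∈ P}}

lemma edgeWeight_deleteEdges_add {x y : {x // x ∈ P}} (hxy : G.Adj x y) :
    edgeWeight P (G.deleteEdges {s(x, y)}) + ‖(x : E) - y‖ = edgeWeight P G := by
  classical
  have hfin : (G.deleteEdges {s(x, y)}).edgeSet.toFinite.toFinset =
      G.edgeSet.toFinite.toFinset.erase s(x, y) := by
    ext e
    simp [and_comm]
  have hmem : s(x, y) ∈ G.edgeSet.toFinite.toFinset := by simpa using hxy
  rw [edgeWeight, edgeWeight, hfin, ← Finset.sum_erase_add _ _ hmem, Sym2.lift_mk]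

lemma edgeWeight_sup_edge {u v : {x // x ∈ P}} (huv : u ≠ v) (hnadj : ¬G.Adj u v) :
    edgeWeight P (G ⊔ edge u v) = edgeWeight P G + ‖(u : E) - v‖ := by
  classical
  have hfin : (G ⊔ edge u v).edgeSet.toFinite.toFinset =
      insert s(u, v) G.edgeSet.toFinite.toFinset := by
    ext e
    simp [edgeSet_edge_of_ne huv]
  have hnmem : s(u, v) ∉ G.edgeSet.toFinite.toFinset := by simpa using hnadj
  rw [edgeWeight, edgeWeight, hfin, Finset.sum_insert hnmem, Sym2.lift_mk, add_comm]

end edgeWeight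

theorem emst_longer_endpoint_in_far_component_general (P : Finset E)
    (T : SimpleGraph {x // x ∈ P}) (hT : IsEMST P T)
    (pi pj pr : {x // x ∈ P}) (hadj : T.Adj pi pj)
    (h2 : ‖(pi : E) - (pj : E)‖ > ‖(pj : E) - (pr : E)‖) :
    (T.deleteEdges {s(pi, pj)}).Reachable pr pj := by
  by_contra hnr
  obtain ⟨htree, hmin⟩ := hT
  have hri : (T.deleteEdges {s(pi, pj)}).Reachable pr pi :=
    (htree.connected.reachable_deleteEdges_or pr pi pj).resolve_right hnr
  have hrj : pr ≠ pj := fun h ↦ hnr (h ▸ .rfl)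
  have hnadj : ¬(T.deleteEdges {s(pi, pj)}).Adj pr pj := fun h ↦ hnr h.reachable
  have hle := hmin _ (htree.sup_edge_deleteEdges hadj hri .rfl)
  rw [edgeWeight_sup_edge hrj hnadj, ← edgeWeight_deleteEdges_add hadj,
    norm_sub_rev (pr : E)] at hle
  linarith

/-- let `{p_i, p_j}` be an edge of a Euclidean minimum spanning tree `T` of
`P`, and let `P₁, P₂` be the components of `T` minus this edge, with `p_i ∈ P₁` and
`p_j ∈ P₂`. If `∠ p_j p_i p_r ≤ π/3` and `‖p_i - p_r‖ > ‖p_i - p_j‖ > ‖p_j - p_r‖`, then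
`p_r ∈ P₂`, i.e., `p_r` is reachable from `p_j` in `T` minus the edge `{p_i, p_j}`. -/
theorem emst_longer_endpoint_in_far_component (P : Finset E)
    (T : SimpleGraph {x // x ∈ P}) (hT : IsEMST P T)
    (pi pj pr : {x // x ∈ P}) (hadj : T.Adj pi pj)
    (hangle : ∠ (pj : E) (pi : E) (pr : E) ≤ π / 3)
    (h1 : ‖(pi : E) - (pr : E)‖ > ‖(pi : E) - (pj : E)‖)
    (h2 : ‖(pi : E) - (pj : E)‖ > ‖(pj : E) - (pr : E)‖) :
    (T.deleteEdges {s(pi, pj)}).Reachable pr pj :=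
  emst_longer_endpoint_in_far_component_general P T hT pi pj pr hadj h2
end
end
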